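/- Let a < b and let f : ℝ → ℝ be twice continuously differentiable. Then for every g ∈ L²((a,b)) with ∫ₐᵇ g = 2 one has F(g) ≥ F(g*), where g* := (x^∞)' is the derivative of x^∞; and F(g) = F(g*) holds if and only if g = g* almost everywhere on (a,b) (equivalently, ξ_g = x^∞ on [a,b]). In other words, x^∞ is the unique global minimizer of the energy F over this class. -/

import Mathlib

open Set MeasureTheory

/-- Fubini for the triangle: swap order in `∫ₐᵇ f(u) ∫ₐᵘ h`. -/
lemma fubini_triangle (a b : ℝ) (hab : a ≤ b) (f h : ℝ → ℝ) (hfc : Continuous f)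
    (hh : IntegrableOn h (Ioc a b)) :
    (∫ u in a..b, f u * (∫ v in a..u, h v)) = ∫ v in a..b, (∫ u in v..b, f u) * h v := by
  set μI := volume.restrict (Ioc a b) with hμI
  have hfI : Integrable f μI := hfc.integrableOn_Ioc
  have hhI : Integrable h μI := hh
  set S : Set (ℝ × ℝ) := {q : ℝ × ℝ | q.2 ≤ q.1} with hS_def
  have hS : MeasurableSet S := measurableSet_le measurable_snd measurable_fst
  set F2 : ℝ → ℝ → ℝ := fun u v => S.indicator (fun q => f q.1 * h q.2) (u, v) with hF2
  have hF2int : Integrable (Function.uncurry F2) (μI.prod μI) := by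
    have huc : Function.uncurry F2 = S.indicator (fun q => f q.1 * h q.2) := rfl
    rw [huc]
    exact (hfI.mul_prod hhI).indicator hS
  have swap := MeasureTheory.integral_integral_swap hF2int
  have L : (∫ u, (∫ v, F2 u v ∂μI) ∂μI) = ∫ u in a..b, f u * (∫ v in a..u, h v) := by
    rw [intervalIntegral.integral_of_le hab, hμI]
    apply setIntegral_congr_fun measurableSet_Ioc
    intro u hu
    have ep : (fun v => F2 u v) = (Iic u).indicator (fun v => f u * h v) := by
      funext v
      by_cases hvu : v ≤ u
      · simp [hF2, hS_def, Set.indicator, hvu]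
      · simp [hF2, hS_def, Set.indicator, hvu]
    simp only
    rw [ep, integral_indicator measurableSet_Iic,
      Measure.restrict_restrict measurableSet_Iic]
    have hset : Iic u ∩ Ioc a b = Ioc a u := by
      rw [inter_comm, Ioc_inter_Iic, min_eq_right hu.2]
    rw [hset, MeasureTheory.integral_const_mul, intervalIntegral.integral_of_le hu.1.le]
  have R : (∫ v, (∫ u, F2 u v ∂μI) ∂μI) = ∫ v in a..b, (∫ u in v..b, f u) * h v := by
    rw [intervalIntegral.integral_of_le hab, hμI]
    apply setIntegral_congr_fun measurableSet_Ioc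
    intro v hv
    have ep : (fun u => F2 u v) = (Ici v).indicator (fun u => f u * h v) := by
      funext u
      by_cases hvu : v ≤ u
      · simp [hF2, hS_def, Set.indicator, hvu]
      · simp [hF2, hS_def, Set.indicator, hvu]
    simp only
    rw [ep, integral_indicator measurableSet_Ici,
      Measure.restrict_restrict measurableSet_Ici]
    have hset : Ici v ∩ Ioc a b = Icc v b := by
      ext x
      simp only [mem_inter_iff, mem_Ici, mem_Ioc, mem_Icc]
      constructor
      · rintro ⟨h1, _, h3⟩; exact ⟨h1, h3⟩
      · rintro ⟨h1, h2⟩; exact ⟨h1, lt_of_lt_of_le hv.1 h1, h2⟩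
    rw [hset, integral_Icc_eq_integral_Ioc, ← intervalIntegral.integral_of_le hv.2,
      intervalIntegral.integral_mul_const]
  rw [← L, ← R]; exact swap

lemma ae_zero_of_forall_primitive_zero (a b : ℝ) (hab : a ≤ b) (h : ℝ → ℝ)
    (hh : IntervalIntegrable h volume a b)
    (H : ∀ u ∈ Icc a b, (∫ v in a..u, h v) = 0) :
    h =ᵐ[volume.restrict (Ioc a b)] 0 := by
  set μI := volume.restrict (Ioc a b) with hμI
  have hint : Integrable h μI := hh.1
  haveI : IsFiniteMeasure μI := by
    constructor
    rw [hμI, Measure.restrict_apply_univ]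
    exact measure_Ioc_lt_top
  have key : ∀ ⦃s : Set ℝ⦄, MeasurableSet s → (∫ x in s, h x ∂μI) = 0 := by
    refine MeasurableSpace.induction_on_inter (C := fun s _ => (∫ x in s, h x ∂μI) = 0)
      (borel_eq_generateFrom_Iic ℝ) isPiSystem_Iic ?_ ?_ ?_ ?_
    · simp
    · rintro t ⟨u, rfl⟩
      rw [hμI, Measure.restrict_restrict measurableSet_Iic]
      have hset : Iic u ∩ Ioc a b = Ioc a (min b u) := by
        rw [inter_comm, Ioc_inter_Iic]
      rw [hset]
      rcases le_or_gt u a with hua | hau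
      · rw [Ioc_eq_empty (by simp; intro; linarith), Measure.restrict_empty, integral_zero_measure]
      · have hc : min b u ∈ Icc a b := ⟨le_min hab hau.le, min_le_left _ _⟩
        rw [← intervalIntegral.integral_of_le hc.1]
        exact H _ hc
    · intro t ht h0
      have := MeasureTheory.integral_add_compl ht hint
      have htot : (∫ x, h x ∂μI) = 0 := by
        rw [hμI, ← intervalIntegral.integral_of_le hab]
        exact H b ⟨hab, le_rfl⟩
      rw [h0, zero_add] at this
      rw [this, htot]
    · intro f hdisj hmeas h0
      rw [integral_iUnion hmeas hdisj hint.integrableOn]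
      simp [h0]
  have := ae_eq_zero_of_forall_setIntegral_eq_of_sigmaFinite
    (μ := μI) (f := h) (fun s hs _ => hint.integrableOn) (fun s hs _ => key hs)
  exact this

/-- The energy `F(g) = ½∫ₐᵇ g² + ∫ₐᵇ f(u) ξ_g(u) du` where
`ξ_g(u) = -1 + ∫ₐᵘ g`. -/
noncomputable def energyF (a b : ℝ) (f g : ℝ → ℝ) : ℝ :=
  (1/2 : ℝ) * (∫ v in a..b, g v ^ 2)
    + ∫ v in a..b, f v * ((-1 : ℝ) + ∫ w in a..v, g w)

/-- Lemma 3.4: `x^∞` is the unique global minimizer of the energy `F` over the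
class of `g ∈ L²((a,b))` with `∫ₐᵇ g = 2`: for each such `g` we have
`F(g) ≥ F((x^∞)')`, with equality iff `g = (x^∞)'` a.e. on `(a,b)`,
equivalently iff `ξ_g = x^∞` on `[a,b]`. -/
theorem lem_unique_minimizer (a b : ℝ) (hab : a < b) (f : ℝ → ℝ)
    (hf : ContDiff ℝ 2 f) (xInf xInf' : ℝ → ℝ)
    (hInf1 : ∀ u ∈ Set.Icc a b, HasDerivWithinAt xInf (xInf' u) (Set.Icc a b) u)
    (hInf2 : ContinuousOn xInf' (Set.Icc a b))
    (hInf3 : ∀ u ∈ Set.Ioo a b, HasDerivAt xInf' (f u) u)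
    (hInfa : xInf a = -1) (hInfb : xInf b = 1) :
    ∀ g : ℝ → ℝ,
      IntervalIntegrable g MeasureTheory.volume a b →
      IntervalIntegrable (fun v => g v ^ 2) MeasureTheory.volume a b →
      (∫ v in a..b, g v) = 2 →
      energyF a b f xInf' ≤ energyF a b f g ∧
      (energyF a b f g = energyF a b f xInf' ↔
        g =ᵐ[MeasureTheory.volume.restrict (Set.Ioo a b)] xInf') ∧
      (energyF a b f g = energyF a b f xInf' ↔
        ∀ u ∈ Set.Icc a b, (-1 : ℝ) + (∫ v in a..u, g v) = xInf u) := by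
  
  intro g hg hg2 hgint
  have hab' : a ≤ b := hab.le
  have huIcc : uIcc a b = Icc a b := uIcc_of_le hab'
  have hfc : Continuous f := hf.continuous
  have hxc : ContinuousOn xInf (Icc a b) := fun u hu => (hInf1 u hu).continuousWithinAt
  have hx'u : ContinuousOn xInf' (uIcc a b) := by rwa [huIcc]
  have hx' : IntervalIntegrable xInf' volume a b := hx'u.intervalIntegrable
  have hx'2 : IntervalIntegrable (fun v => xInf' v ^ 2) volume a b :=
    (hx'u.pow 2).intervalIntegrable
  have hgx' : IntervalIntegrable (fun v => g v * xInf' v) volume a b :=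
    hg.mul_continuousOn hx'u
  set h : ℝ → ℝ := fun v => g v - xInf' v with hh_def
  have hhint : IntervalIntegrable h volume a b := hg.sub hx'
  have hh2 : IntervalIntegrable (fun v => h v ^ 2) volume a b := by
    have e : (fun v => h v ^ 2)
        = fun v => g v ^ 2 - 2 * (g v * xInf' v) + xInf' v ^ 2 := by
      funext v; simp only [hh_def]; ring
    rw [e]
    exact (hg2.sub (hgx'.const_mul 2)).add hx'2
  -- FTC for xInf
  have hsub : ∀ u ∈ Icc a b, uIcc a u ⊆ uIcc a b := by
    intro u hu
    rw [uIcc_of_le hu.1, huIcc]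
    exact Icc_subset_Icc le_rfl hu.2
  have hFTC1 : ∀ u ∈ Icc a b, (∫ v in a..u, xInf' v) = xInf u - xInf a := by
    intro u hu
    apply intervalIntegral.integral_eq_sub_of_hasDeriv_right_of_le hu.1
    · exact hxc.mono (Icc_subset_Icc le_rfl hu.2)
    · intro x hx
      have hx0 : x ∈ Ioo a b := ⟨hx.1, lt_of_lt_of_le hx.2 hu.2⟩
      exact ((hInf1 x (Ioo_subset_Icc_self hx0)).hasDerivAt
        (Icc_mem_nhds hx0.1 hx0.2)).hasDerivWithinAt
    · exact hx'.mono_set (hsub u hu)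
  have hxa : (∫ v in a..b, xInf' v) = 2 := by
    rw [hFTC1 b ⟨hab', le_rfl⟩, hInfb, hInfa]; norm_num
  have hFTC2 : ∀ v ∈ Icc a b, (∫ u in v..b, f u) = xInf' b - xInf' v := by
    intro v hv
    apply intervalIntegral.integral_eq_sub_of_hasDeriv_right_of_le hv.2
    · exact hInf2.mono (Icc_subset_Icc hv.1 le_rfl)
    · intro x hx
      exact (hInf3 x ⟨lt_of_le_of_lt hv.1 hx.1, hx.2⟩).hasDerivWithinAt
    · exact hfc.intervalIntegrable _ _
  -- continuity of primitives
  have hprim : ∀ k : ℝ → ℝ, IntervalIntegrable k volume a b →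
      ContinuousOn (fun u => ∫ w in a..u, k w) (Icc a b) := by
    intro k hk
    rw [← huIcc]
    exact intervalIntegral.continuousOn_primitive_interval' hk left_mem_uIcc
  have hint_fg : IntervalIntegrable
      (fun v => f v * ((-1 : ℝ) + ∫ w in a..v, g w)) volume a b := by
    apply ContinuousOn.intervalIntegrable
    rw [huIcc]
    exact hfc.continuousOn.mul (continuousOn_const.add (hprim g hg))
  have hint_fx : IntervalIntegrable
      (fun v => f v * ((-1 : ℝ) + ∫ w in a..v, xInf' w)) volume a b := by
    apply ContinuousOn.intervalIntegrable
    rw [huIcc]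
    exact hfc.continuousOn.mul (continuousOn_const.add (hprim xInf' hx'))
  have hx'h : IntervalIntegrable (fun v => xInf' v * h v) volume a b :=
    hhint.continuousOn_mul hx'u
  have hhtot : (∫ v in a..b, h v) = 0 := by
    rw [hh_def]
    rw [intervalIntegral.integral_sub hg hx', hgint, hxa]
    ring
  -- the key energy identity
  have key : energyF a b f g - energyF a b f xInf'
      = (1/2 : ℝ) * ∫ v in a..b, h v ^ 2 := by
    have e1 : (∫ v in a..b, f v * ((-1 : ℝ) + ∫ w in a..v, g w))
        - (∫ v in a..b, f v * ((-1 : ℝ) + ∫ w in a..v, xInf' w))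
        = ∫ u in a..b, f u * (∫ w in a..u, h w) := by
      rw [← intervalIntegral.integral_sub hint_fg hint_fx]
      apply intervalIntegral.integral_congr
      intro u hu
      rw [huIcc] at hu
      simp only
      rw [hh_def]
      rw [intervalIntegral.integral_sub (hg.mono_set (hsub u hu)) (hx'.mono_set (hsub u hu))]
      ring
    have e2 : (∫ u in a..b, f u * (∫ w in a..u, h w))
        = ∫ v in a..b, (∫ u in v..b, f u) * h v :=
      fubini_triangle a b hab' f h hfc hhint.1
    have e3 : (∫ v in a..b, (∫ u in v..b, f u) * h v)
        = - ∫ v in a..b, xInf' v * h v := by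
      have e3a : (∫ v in a..b, (∫ u in v..b, f u) * h v)
          = ∫ v in a..b, (xInf' b * h v - xInf' v * h v) := by
        apply intervalIntegral.integral_congr
        intro v hv
        rw [huIcc] at hv
        simp only
        rw [hFTC2 v hv]
        ring
      rw [e3a, intervalIntegral.integral_sub (hhint.const_mul _) hx'h,
        intervalIntegral.integral_const_mul, hhtot]
      ring
    have e4 : (∫ v in a..b, h v ^ 2)
        = (∫ v in a..b, g v ^ 2) - 2 * (∫ v in a..b, g v * xInf' v)
          + (∫ v in a..b, xInf' v ^ 2) := by
      have e : (fun v => h v ^ 2)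
          = fun v => g v ^ 2 - 2 * (g v * xInf' v) + xInf' v ^ 2 := by
        funext v; simp only [hh_def]; ring
      rw [e, intervalIntegral.integral_add (hg2.sub (hgx'.const_mul 2)) hx'2,
        intervalIntegral.integral_sub hg2 (hgx'.const_mul 2),
        intervalIntegral.integral_const_mul]
    have e5 : (∫ v in a..b, xInf' v * h v)
        = (∫ v in a..b, g v * xInf' v) - (∫ v in a..b, xInf' v ^ 2) := by
      have e : (fun v => xInf' v * h v)
          = fun v => g v * xInf' v - xInf' v ^ 2 := by
        funext v; simp only [hh_def]; ring
      rw [e, intervalIntegral.integral_sub hgx' hx'2]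
    simp only [energyF]
    rw [← e1] at e2
    -- energy difference
    have : (∫ v in a..b, f v * ((-1 : ℝ) + ∫ w in a..v, g w))
        - (∫ v in a..b, f v * ((-1 : ℝ) + ∫ w in a..v, xInf' w))
        = - ∫ v in a..b, xInf' v * h v := by rw [e2, e3]
    rw [e5] at this
    rw [e4]
    linarith [this]
  have hnn : 0 ≤ ∫ v in a..b, h v ^ 2 :=
    intervalIntegral.integral_nonneg hab' (fun u _ => sq_nonneg _)
  -- chain of equivalences
  have E0 : (energyF a b f g = energyF a b f xInf') ↔ (∫ v in a..b, h v ^ 2) = 0 := by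
    constructor
    · intro he; nlinarith [key]
    · intro hz; nlinarith [key]
  have E1 : ((∫ v in a..b, h v ^ 2) = 0) ↔ h =ᵐ[volume.restrict (Ioc a b)] 0 := by
    rw [intervalIntegral.integral_eq_zero_iff_of_le_of_nonneg_ae hab'
      (Filter.Eventually.of_forall fun v => sq_nonneg _) hh2]
    constructor
    · intro hsq
      filter_upwards [hsq] with v hv
      have : h v ^ 2 = 0 := hv
      exact pow_eq_zero_iff (by norm_num) |>.mp this
    · intro hz
      filter_upwards [hz] with v hv
      simp [hv]
  have hrestr : volume.restrict (Ioo a b) = volume.restrict (Ioc a b) :=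
    Measure.restrict_congr_set Ioo_ae_eq_Ioc
  have E2 : (h =ᵐ[volume.restrict (Ioc a b)] 0) ↔
      g =ᵐ[volume.restrict (Ioo a b)] xInf' := by
    rw [hrestr]
    constructor
    · intro hz; filter_upwards [hz] with v hv
      have : g v - xInf' v = 0 := hv
      linarith
    · intro hz; filter_upwards [hz] with v hv
      show g v - xInf' v = 0
      rw [hv]; ring
  have E3 : (h =ᵐ[volume.restrict (Ioc a b)] 0) ↔
      ∀ u ∈ Icc a b, (-1 : ℝ) + (∫ v in a..u, g v) = xInf u := by
    constructor
    · intro hz u hu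
      have hsub' : Ioc a u ⊆ Ioc a b := Ioc_subset_Ioc le_rfl hu.2
      have hz' : h =ᵐ[volume.restrict (Ioc a u)] 0 :=
        ae_restrict_of_ae_restrict_of_subset hsub' hz
      have hint0 : (∫ v in a..u, h v) = 0 := by
        rw [intervalIntegral.integral_of_le hu.1]
        rw [integral_congr_ae hz']
        simp
      rw [hh_def, intervalIntegral.integral_sub (hg.mono_set (hsub u hu))
        (hx'.mono_set (hsub u hu))] at hint0
      have := hFTC1 u hu
      rw [hInfa] at this
      linarith [hint0, this]
    · intro hXi
      apply ae_zero_of_forall_primitive_zero a b hab' h hhint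
      intro u hu
      rw [hh_def, intervalIntegral.integral_sub (hg.mono_set (hsub u hu))
        (hx'.mono_set (hsub u hu)), hFTC1 u hu, hInfa]
      have := hXi u hu
      linarith
  refine ⟨by linarith [key, hnn], E0.trans (E1.trans E2), E0.trans (E1.trans E3)⟩
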